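/- With Q^{αβ}(x,y) = Σ_k σ_k^α(x) σ_k^β(y) for C² vector fields σ_k with locally uniformly convergent sums of derivatives, the double Lie bracket satisfies, componentwise, Σ_k [σ_k,[σ_k,B]]^α(x) = Σ_{i,j} Q^{ij}(x,x) ∂_i∂_j B^α + Σ_i (Σ_γ ∂_γ^{(2)}Q^{γi}(x,x)) ∂_i B^α − 2Σ_{i,β} ∂_β^{(2)}Q^{iα}(x,x) ∂_i B^β + Σ_β (Σ_γ ∂_β^{(1)}∂_γ^{(2)}Q^{γα}(x,x) − Σ_γ ∂_γ^{(2)}∂_β^{(2)}Q^{γα}(x,x)) B^β, for every C² vector field B. -/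

import Mathlib

/-!
Expanding `[σ,[σ,B]]^α(x)` by the Leibniz rule gives a sum of monomials, each the product of a
coefficient depending only on `B` and of two factors `σ^a`, `∂σ^a` or `∂∂σ^a` evaluated at `x`.
Summed over `k`, each such pair is one of the given series for `Q` and its derivatives on the
diagonal; the two monomials `σ^i ∂_i B^j ∂_j σ^α` and `σ^j ∂_j B^i ∂_i σ^α` coincide after
exchanging the summation indices, which produces the factor `2`.
-/

/-- Partial derivative `∂_i f x` of a scalar function on `ℝ^d`. -/
noncomputable def pd {d : ℕ} (i : Fin d) (f : (Fin d → ℝ) → ℝ) (x : Fin d → ℝ) : ℝ :=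
  fderiv ℝ f x (Pi.single i 1)

/-- Derivative `∂_i^{(1)}` of a two-point function in its first argument. -/
noncomputable def pd1 {d : ℕ} (i : Fin d) (F : (Fin d → ℝ) → (Fin d → ℝ) → ℝ)
    (x y : Fin d → ℝ) : ℝ :=
  pd i (fun z => F z y) x

/-- Derivative `∂_i^{(2)}` of a two-point function in its second argument. -/
noncomputable def pd2 {d : ℕ} (i : Fin d) (F : (Fin d → ℝ) → (Fin d → ℝ) → ℝ)
    (x y : Fin d → ℝ) : ℝ :=
  pd i (F x) y

/-- Lie bracket `[A,B]^α = Σ_i (A^i ∂_i B^α − B^i ∂_i A^α)`. -/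
noncomputable def lieBracket {d : ℕ} (A B : (Fin d → ℝ) → Fin d → ℝ)
    (x : Fin d → ℝ) (α : Fin d) : ℝ :=
  (∑ i, A x i * pd i (fun y => B y α) x) - (∑ i, B x i * pd i (fun y => A y α) x)

section

variable {d : ℕ}

lemma contDiff_pd {m n : WithTop ℕ∞} {f : (Fin d → ℝ) → ℝ} (hf : ContDiff ℝ n f)
    (hmn : m + 1 ≤ n) (i : Fin d) : ContDiff ℝ m (pd i f) :=
  (hf.fderiv_right hmn).clm_apply contDiff_const

lemma differentiable_component {A : (Fin d → ℝ) → Fin d → ℝ} (hA : ContDiff ℝ 2 A) (γ : Fin d) :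
    Differentiable ℝ (fun y => A y γ) :=
  ((contDiff_pi.mp hA) γ).differentiable (by norm_num)

lemma differentiable_pd_component {A : (Fin d → ℝ) → Fin d → ℝ} (hA : ContDiff ℝ 2 A)
    (i γ : Fin d) : Differentiable ℝ (pd i (fun y => A y γ)) :=
  (contDiff_pd (m := 1) ((contDiff_pi.mp hA) γ) (by norm_num) i).differentiable one_ne_zero

lemma pd_mul {f g : (Fin d → ℝ) → ℝ} {x : Fin d → ℝ} (i : Fin d)
    (hf : DifferentiableAt ℝ f x) (hg : DifferentiableAt ℝ g x) :
    pd i (fun y => f y * g y) x = pd i f x * g x + f x * pd i g x := by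
  simp only [pd, fderiv_fun_mul hf hg, add_apply, smul_apply, smul_eq_mul]
  ring

lemma pd_sub {f g : (Fin d → ℝ) → ℝ} {x : Fin d → ℝ} (i : Fin d)
    (hf : DifferentiableAt ℝ f x) (hg : DifferentiableAt ℝ g x) :
    pd i (fun y => f y - g y) x = pd i f x - pd i g x := by
  simp only [pd, fderiv_fun_sub hf hg, sub_apply]

lemma pd_sum {ι : Type*} {s : Finset ι} {f : ι → (Fin d → ℝ) → ℝ} {x : Fin d → ℝ} (i : Fin d)
    (h : ∀ j ∈ s, DifferentiableAt ℝ (f j) x) :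
    pd i (fun y => ∑ j ∈ s, f j y) x = ∑ j ∈ s, pd i (f j) x := by
  simp only [pd, fderiv_fun_sum h, sum_apply]

lemma pd_lieBracket {A B : (Fin d → ℝ) → Fin d → ℝ} (hA : ContDiff ℝ 2 A) (hB : ContDiff ℝ 2 B)
    (i : Fin d) (x : Fin d → ℝ) (α : Fin d) :
    pd i (fun y => lieBracket A B y α) x =
      (∑ j, (pd i (fun y => A y j) x * pd j (fun y => B y α) x
        + A x j * pd i (fun y => pd j (fun z => B z α) y) x))
      - ∑ j, (pd i (fun y => B y j) x * pd j (fun y => A y α) x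
        + B x j * pd i (fun y => pd j (fun z => A z α) y) x) := by
  have hAB : ∀ j ∈ Finset.univ, DifferentiableAt ℝ (fun y => A y j * pd j (fun z => B z α) y) x :=
    fun j _ => ((differentiable_component hA j).mul (differentiable_pd_component hB j α)) x
  have hBA : ∀ j ∈ Finset.univ, DifferentiableAt ℝ (fun y => B y j * pd j (fun z => A z α) y) x :=
    fun j _ => ((differentiable_component hB j).mul (differentiable_pd_component hA j α)) x
  simp only [lieBracket]
  rw [pd_sub i (DifferentiableAt.fun_sum hAB) (DifferentiableAt.fun_sum hBA), pd_sum i hAB,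
    pd_sum i hBA]
  simp only [fun j => pd_mul i (differentiable_component hA j x)
      (differentiable_pd_component hB j α x),
    fun j => pd_mul i (differentiable_component hB j x) (differentiable_pd_component hA j α x)]

lemma Fintype.sum_comm_of_eq {ι κ M : Type*} [Fintype ι] [Fintype κ] [AddCommMonoid M]
    {f : ι → κ → M} {g : κ → ι → M} (h : ∀ i j, f i j = g j i) :
    ∑ i, ∑ j, f i j = ∑ j, ∑ i, g j i := by
  rw [Finset.sum_comm]
  exact Fintype.sum_congr _ _ fun j => Fintype.sum_congr _ _ fun i => h i j

theorem lieBracket_lieBracket_self {A B : (Fin d → ℝ) → Fin d → ℝ} (hA : ContDiff ℝ 2 A)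
    (hB : ContDiff ℝ 2 B) (x : Fin d → ℝ) (α : Fin d) :
    lieBracket A (fun y β => lieBracket A B y β) x α =
      (∑ i, ∑ j, A x i * A x j * pd i (fun y => pd j (fun z => B z α) y) x)
        + (∑ i, (∑ γ, A x γ * pd γ (fun z => A z i) x) * pd i (fun y => B y α) x)
        - 2 * ∑ i, ∑ β, A x i * pd β (fun z => A z α) x * pd i (fun y => B y β) x
        + ∑ β, ((∑ γ, pd β (fun z => A z γ) x * pd γ (fun z => A z α) x)
            - ∑ γ, A x γ * pd γ (fun y => pd β (fun z => A z α) y) x) * B x β := by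
  rw [lieBracket.eq_1 A (fun y β => lieBracket A B y β)]
  simp only [pd_lieBracket hA hB]
  simp only [lieBracket, two_mul, mul_sub, mul_add, sub_mul, Finset.mul_sum, Finset.sum_mul,
    Finset.sum_add_distrib, Finset.sum_sub_distrib]
  have e₁ : ∑ i, ∑ j, A x i * (A x j * pd i (fun y => pd j (fun y => B y α) y) x)
      = ∑ i, ∑ j, A x i * A x j * pd i (fun y => pd j (fun y => B y α) y) x :=
    Fintype.sum_congr _ _ fun i => Fintype.sum_congr _ _ fun j => (mul_assoc _ _ _).symm
  have e₂ : ∑ i, ∑ j, A x i * (pd i (fun y => A y j) x * pd j (fun y => B y α) x)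
      = ∑ i, ∑ j, A x j * pd j (fun z => A z i) x * pd i (fun y => B y α) x :=
    Fintype.sum_comm_of_eq fun i j => (mul_assoc _ _ _).symm
  have e₃ : ∑ i, ∑ j, A x i * (pd i (fun y => B y j) x * pd j (fun y => A y α) x)
      = ∑ i, ∑ j, A x i * pd j (fun y => A y α) x * pd i (fun y => B y j) x :=
    Fintype.sum_congr _ _ fun i => Fintype.sum_congr _ _ fun j => by ring
  have e₄ : ∑ i, ∑ j, A x j * pd j (fun y => B y i) x * pd i (fun y => A y α) x
      = ∑ i, ∑ j, A x i * pd j (fun y => A y α) x * pd i (fun y => B y j) x :=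
    Fintype.sum_comm_of_eq fun i j => by ring
  have e₅ : ∑ i, ∑ j, B x j * pd j (fun y => A y i) x * pd i (fun y => A y α) x
      = ∑ i, ∑ j, pd i (fun z => A z j) x * pd j (fun y => A y α) x * B x i :=
    Fintype.sum_comm_of_eq fun i j => by ring
  have e₆ : ∑ i, ∑ j, A x i * (B x j * pd i (fun y => pd j (fun y => A y α) y) x)
      = ∑ i, ∑ j, A x j * pd j (fun y => pd i (fun y => A y α) y) x * B x i :=
    Fintype.sum_comm_of_eq fun i j => by ring
  rw [e₁, e₂, e₃, e₄, e₅, e₆]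
  ring

end

theorem stmt9_general {d : ℕ} (σ : ℕ → (Fin d → ℝ) → Fin d → ℝ)
    (Q : (Fin d → ℝ) → (Fin d → ℝ) → Fin d → Fin d → ℝ)
    (hσreg : ∀ k, ContDiff ℝ 2 (σ k))
    (h0 : ∀ x y α β, HasSum (fun k => σ k x α * σ k y β) (Q x y α β))
    (h2 : ∀ (i : Fin d) x y α β,
      HasSum (fun k => σ k x α * pd i (fun z => σ k z β) y)
        (pd2 i (fun x' y' => Q x' y' α β) x y))
    (h12 : ∀ (i j : Fin d) x y α β,
      HasSum (fun k => pd i (fun z => σ k z α) x * pd j (fun z => σ k z β) y)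
        (pd1 i (fun x' y' => pd2 j (fun x'' y'' => Q x'' y'' α β) x' y') x y))
    (h22 : ∀ (i j : Fin d) x y α β,
      HasSum (fun k => σ k x α * pd i (fun z => pd j (fun w => σ k w β) z) y)
        (pd2 i (fun x' y' => pd2 j (fun x'' y'' => Q x'' y'' α β) x' y') x y))
    (B : (Fin d → ℝ) → Fin d → ℝ) (hB : ContDiff ℝ 2 B) (x : Fin d → ℝ) (α : Fin d) :
    HasSum (fun k => lieBracket (σ k) (fun y β => lieBracket (σ k) B y β) x α)
      ((∑ i, ∑ j, Q x x i j * pd i (fun y => pd j (fun z => B z α) y) x)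
        + (∑ i, (∑ γ, pd2 γ (fun x' y' => Q x' y' γ i) x x) * pd i (fun y => B y α) x)
        - 2 * ∑ i, ∑ β, pd2 β (fun x' y' => Q x' y' i α) x x * pd i (fun y => B y β) x
        + ∑ β, ((∑ γ, pd1 β (fun x' y' => pd2 γ (fun x'' y'' => Q x'' y'' γ α) x' y') x x)
            - ∑ γ, pd2 γ (fun x' y' => pd2 β (fun x'' y'' => Q x'' y'' γ α) x' y') x x)
          * B x β) := by
  simp only [lieBracket_lieBracket_self (hσreg _) hB]
  refine HasSum.add (HasSum.sub (HasSum.add ?_ ?_) (HasSum.mul_left 2 ?_)) ?_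
  · exact hasSum_sum fun i _ => hasSum_sum fun j _ => (h0 x x i j).mul_right _
  · exact hasSum_sum fun i _ => (hasSum_sum fun γ _ => h2 γ x x γ i).mul_right _
  · exact hasSum_sum fun i _ => hasSum_sum fun β _ => (h2 β x x i α).mul_right _
  · exact hasSum_sum fun β _ => ((hasSum_sum fun γ _ => h12 β γ x x γ α).sub
      (hasSum_sum fun γ _ => h22 γ β x x γ α)).mul_right _

/-- with `Q^{αβ}(x,y) = Σ_k σ_k^α(x) σ_k^β(y)` (the sums of the fields and of
their termwise derivatives converging to `Q` and to its corresponding derivatives), the double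
Lie brackets satisfy, componentwise,
`Σ_k [σ_k,[σ_k,B]]^α(x) = Σ_{i,j} Q^{ij}(x,x) ∂_i∂_j B^α
  + Σ_i (Σ_γ ∂_γ^{(2)}Q^{γi}(x,x)) ∂_i B^α − 2 Σ_{i,β} ∂_β^{(2)}Q^{iα}(x,x) ∂_i B^β
  + Σ_β (Σ_γ ∂_β^{(1)}∂_γ^{(2)}Q^{γα}(x,x) − Σ_γ ∂_γ^{(2)}∂_β^{(2)}Q^{γα}(x,x)) B^β`. -/
theorem stmt9 {d : ℕ} (σ : ℕ → (Fin d → ℝ) → Fin d → ℝ)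
    (Q : (Fin d → ℝ) → (Fin d → ℝ) → Fin d → Fin d → ℝ)
    (hσreg : ∀ k, ContDiff ℝ 2 (σ k))
    (h0 : ∀ x y α β, HasSum (fun k => σ k x α * σ k y β) (Q x y α β))
    (h1 : ∀ (i : Fin d) x y α β,
      HasSum (fun k => pd i (fun z => σ k z α) x * σ k y β)
        (pd1 i (fun x' y' => Q x' y' α β) x y))
    (h2 : ∀ (i : Fin d) x y α β,
      HasSum (fun k => σ k x α * pd i (fun z => σ k z β) y)
        (pd2 i (fun x' y' => Q x' y' α β) x y))
    (h12 : ∀ (i j : Fin d) x y α β,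
      HasSum (fun k => pd i (fun z => σ k z α) x * pd j (fun z => σ k z β) y)
        (pd1 i (fun x' y' => pd2 j (fun x'' y'' => Q x'' y'' α β) x' y') x y))
    (h22 : ∀ (i j : Fin d) x y α β,
      HasSum (fun k => σ k x α * pd i (fun z => pd j (fun w => σ k w β) z) y)
        (pd2 i (fun x' y' => pd2 j (fun x'' y'' => Q x'' y'' α β) x' y') x y))
    (B : (Fin d → ℝ) → Fin d → ℝ) (hB : ContDiff ℝ 2 B) (x : Fin d → ℝ) (α : Fin d) :
    HasSum (fun k => lieBracket (σ k) (fun y β => lieBracket (σ k) B y β) x α)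
      ((∑ i, ∑ j, Q x x i j * pd i (fun y => pd j (fun z => B z α) y) x)
        + (∑ i, (∑ γ, pd2 γ (fun x' y' => Q x' y' γ i) x x) * pd i (fun y => B y α) x)
        - 2 * ∑ i, ∑ β, pd2 β (fun x' y' => Q x' y' i α) x x * pd i (fun y => B y β) x
        + ∑ β, ((∑ γ, pd1 β (fun x' y' => pd2 γ (fun x'' y'' => Q x'' y'' γ α) x' y') x x)
            - ∑ γ, pd2 γ (fun x' y' => pd2 β (fun x'' y'' => Q x'' y'' γ α) x' y') x x)
          * B x β) :=
  stmt9_general σ Q hσreg h0 h2 h12 h22 B hB x α
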